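/- arXiv:2310.04926 — 5 statements merged into one kernel-verified Lean document; each statement's English description precedes it below -/
import Mathlib

section
/- Let φ : H → G be a group homomorphism and let T : A^G → A^H be φ-equivariant, meaning h · T(x) = T(φ(h) · x) for all x ∈ A^G, h ∈ H, where the shift actions are (g·x)(k) = x(g⁻¹k). If T is surjective, then φ is injective. -/
theorem stmt5 {G H : Type*} [Group G] [Group H] (A : Type*) [Nontrivial A]
    (φ : H →* G) (𝒯 : (G → A) → (H → A))
    (hequiv : ∀ (x : G → A) (h : H),
      (fun k => 𝒯 x (h⁻¹ * k)) = 𝒯 (fun k => x ((φ h)⁻¹ * k)))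
    (hsurj : Function.Surjective 𝒯) :
    Function.Injective φ := by
  rw [injective_iff_map_eq_one]
  intro h hh
  classical
  by_contra hne
  obtain ⟨a, b, hab⟩ := exists_pair_ne A
  obtain ⟨x, hx⟩ := hsurj (fun k => if k = 1 then a else b)
  have key := hequiv x h
  rw [hh] at key
  simp only [inv_one, one_mul] at key
  have := congrFun key h
  rw [inv_mul_cancel] at this
  rw [hx] at this
  simp only [if_pos rfl, if_neg hne] at this
  exact hab this
end

section
/- Let φ, ψ : H → G be group homomorphisms with Δ(φ,ψ) = { ψ(h)⁻¹φ(h) : h ∈ H } infinite, and let T ⊆ G be a finite subset. Then there exists h ∈ H such that φ(h)T ∩ ψ(h)T = ∅. -/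
open scoped Pointwise


theorem stmt11 {G H : Type*} [Group G] [Group H] (φ ψ : H →* G)
    (hΔ : (Set.range fun h => (ψ h)⁻¹ * φ h).Infinite)
    (T : Set G) (hT : T.Finite) :
    ∃ h : H, ((fun t => φ h * t) '' T) ∩ ((fun t => ψ h * t) '' T) = ∅ := by
  have hT' : (T * T⁻¹ : Set G).Finite := hT.mul hT.inv
  obtain ⟨r, hr, hrT⟩ := (hΔ.diff hT').nonempty
  obtain ⟨h, hh⟩ := hr
  refine ⟨h, Set.eq_empty_iff_forall_notMem.2 ?_⟩
  rintro x ⟨⟨t, ht, rfl⟩, ⟨t', ht', he⟩⟩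
  apply hrT
  simp only at he
  have : r * t = t' := by
    subst hh
    simp only
    rw [mul_assoc, ← he]
    group
  exact ⟨t', ht', t⁻¹, Set.inv_mem_inv.2 ht, by rw [← this]; group⟩
end

section
/- Let G and H be groups, A a finite set, φ : H → G a homomorphism, and T : A^G → A^H a φ-cellular automaton with memory set T₀ ⊆ G and local function μ : A^{T₀} → A. Then there is a unique classical cellular automaton τ : A^G → A^G (with the same memory set and local function, i.e., τ(x)(g) = μ((g⁻¹·x)|_{T₀})) such that T = φ* ∘ τ. -/
/-- A classical cellular automaton: determined by some finite memory set and local rule. -/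
def IsCellularAutomaton {G A : Type*} [Group G] (τ : (G → A) → (G → A)) : Prop :=
  ∃ (S : Finset G) (ν : ({ s : G // s ∈ S } → A) → A),
    ∀ (x : G → A) (g : G), τ x g = ν (fun t => x (g * (t : G)))

theorem stmt16 {G H : Type*} [Group G] [Group H] (A : Type*) [Finite A]
    (φ : H →* G) (T₀ : Finset G) (μ : ({ t : G // t ∈ T₀ } → A) → A)
    (𝒯 : (G → A) → (H → A))
    (h𝒯 : ∀ (x : G → A) (h : H), 𝒯 x h = μ (fun t => x (φ h * (t : G)))) :
    ((∀ x : G → A, 𝒯 x = (fun g => μ (fun t => x (g * (t : G)))) ∘ φ) ∧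
      ∃! τ : (G → A) → (G → A),
        IsCellularAutomaton τ ∧ ∀ x : G → A, 𝒯 x = τ x ∘ φ) := by
  constructor
  · intro x
    funext h
    exact h𝒯 x h
  · refine ⟨fun x g => μ (fun t => x (g * (t : G))), ⟨⟨T₀, μ, fun _ _ => rfl⟩, ?_⟩, ?_⟩
    · intro x
      funext h
      exact h𝒯 x h
    · rintro τ' ⟨⟨S, ν, hτ'⟩, hcomp⟩
      funext x g
      set y : G → A := fun k => x (g * k) with hy
      have h1 : τ' y 1 = ν (fun t => y (t : G)) := by
        simpa using hτ' y 1
      have h2 : τ' y 1 = μ (fun t => y (t : G)) := by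
        have := congrFun (hcomp y) 1
        rw [h𝒯] at this
        simpa using this.symm
      have h3 : τ' x g = ν (fun t => y (t : G)) := hτ' x g
      rw [h3, ← h1, h2]
end

section
/- Let φ, ψ : H → G be homomorphisms and let T : A^G → A^H be a φ-cellular automaton with memory set T₀ ⊆ G and local function μ : A^{T₀} → A. Suppose ψ(h)⁻¹φ(h)T₀ = T₀ for all h ∈ H and μ is symmetric, i.e., μ(z ∘ f) = μ(z) for every bijection f of T₀ and every z ∈ A^{T₀}. Then T is also a ψ-cellular automaton with the same memory set and local function, i.e., T(x)(h) = μ((ψ(h⁻¹)·x)|_{T₀}) for all x, h. -/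
theorem stmt17 {G H : Type*} [Group G] [Group H] {A : Type*}
    (φ ψ : H →* G) (T₀ : Finset G) (μ : ({ t : G // t ∈ T₀ } → A) → A)
    (𝒯 : (G → A) → (H → A))
    (h𝒯 : ∀ (x : G → A) (h : H), 𝒯 x h = μ (fun t => x (φ h * (t : G))))
    (hT₀ : ∀ h : H, (fun t => (ψ h)⁻¹ * φ h * t) '' (T₀ : Set G) = (T₀ : Set G))
    (hsym : ∀ (f : { t : G // t ∈ T₀ } ≃ { t : G // t ∈ T₀ }) (z : { t : G // t ∈ T₀ } → A),
      μ (fun t => z (f t)) = μ z) :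
    ∀ (x : G → A) (h : H), 𝒯 x h = μ (fun t => x (ψ h * (t : G))) := by
  intro x h
  have hmem : ∀ t : { t : G // t ∈ T₀ }, (ψ h)⁻¹ * φ h * (t : G) ∈ T₀ := by
    intro t
    have : (ψ h)⁻¹ * φ h * (t : G) ∈ ((fun t => (ψ h)⁻¹ * φ h * t) '' (T₀ : Set G)) :=
      ⟨t, t.2, rfl⟩
    rw [hT₀ h] at this
    exact this
  have hbij : Function.Bijective (fun t : { t : G // t ∈ T₀ } =>
      (⟨(ψ h)⁻¹ * φ h * (t : G), hmem t⟩ : { t : G // t ∈ T₀ })) := by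
    constructor
    · intro a b hab
      have := congrArg Subtype.val hab
      simp only at this
      exact Subtype.ext (mul_left_cancel this)
    · intro b
      have : (b : G) ∈ ((fun t => (ψ h)⁻¹ * φ h * t) '' (T₀ : Set G)) := by
        rw [hT₀ h]; exact b.2
      obtain ⟨t, ht, hteq⟩ := this
      exact ⟨⟨t, ht⟩, Subtype.ext hteq⟩
  let f := Equiv.ofBijective _ hbij
  have := hsym f (fun t => x (ψ h * (t : G)))
  rw [h𝒯]
  rw [← this]
  congr 1
  funext t
  have hf : ((f t : G)) = (ψ h)⁻¹ * φ h * (t : G) := rfl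
  rw [hf]
  congr 1
  group
end

section
/- Let G, H be groups, A a set with |A| ≥ 2, φ, ψ : H → G homomorphisms with infinite difference set Δ(φ,ψ) = { ψ(h)⁻¹φ(h) : h ∈ H }, and let τ : A^G → A^G be a non-constant cellular automaton with finite memory set T₀ and local function μ. Then φ* ∘ τ ≠ ψ* ∘ τ. -/
theorem stmt18 {G H : Type*} [Group G] [Group H] {A : Type*} [Nontrivial A]
    (φ ψ : H →* G)
    (hΔ : (Set.range fun h => (ψ h)⁻¹ * φ h).Infinite)
    (T₀ : Finset G) (μ : ({ t : G // t ∈ T₀ } → A) → A)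
    (hμ : ∃ z w, μ z ≠ μ w)
    (τ : (G → A) → (G → A))
    (hτ : ∀ (x : G → A) (g : G), τ x g = μ (fun t => x (g * (t : G)))) :
    (fun x : G → A => τ x ∘ φ) ≠ (fun x : G → A => τ x ∘ ψ) := by
  classical
  obtain ⟨z, w, hzw⟩ := hμ
  -- finite set of bad differences
  set S : Finset G := (T₀ ×ˢ T₀).image (fun p : G × G => p.2 * p.1⁻¹) with hS
  obtain ⟨δ, ⟨h, hh⟩, hδS⟩ := hΔ.exists_notMem_finset S
  -- define configuration x
  set a := φ h
  set b := ψ h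
  have hab : ∀ t t' : { t : G // t ∈ T₀ }, b * (t : G) ≠ a * (t' : G) := by
    intro t t' heq
    apply hδS
    rw [hS]
    refine Finset.mem_image.mpr ⟨((t' : G), (t : G)), Finset.mem_product.mpr ⟨t'.2, t.2⟩, ?_⟩
    have : (b)⁻¹ * a = (t : G) * (t' : G)⁻¹ := by
      have h2 : b⁻¹ * (b * (t : G)) * (t' : G)⁻¹ = b⁻¹ * (a * (t' : G)) * (t' : G)⁻¹ := by
        rw [heq]
      group at h2
      simpa using h2.symm
    rw [← hh]
    simpa [a, b] using this.symm
  let x : G → A := fun g =>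
    if hg : ∃ t : { t : G // t ∈ T₀ }, g = a * (t : G) then z hg.choose
    else if hg' : ∃ t : { t : G // t ∈ T₀ }, g = b * (t : G) then w hg'.choose
    else μ z
  intro hcontra
  have key : τ x (φ h) = τ x (ψ h) := by
    have := congrFun (congrFun hcontra x) h
    simpa using this
  rw [hτ, hτ] at key
  apply hzw
  have h1 : (fun t : { t : G // t ∈ T₀ } => x (a * (t : G))) = z := by
    funext t
    have hg : ∃ t' : { t : G // t ∈ T₀ }, a * (t : G) = a * (t' : G) := ⟨t, rfl⟩
    have : hg.choose = t := by
      have := hg.choose_spec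
      exact Subtype.ext (mul_left_cancel this.symm)
    have hx : x (a * (t : G)) = z hg.choose := by
      show (if hg2 : ∃ t' : { t : G // t ∈ T₀ }, a * (t : G) = a * (t' : G) then z hg2.choose
        else if hg2' : ∃ t' : { t : G // t ∈ T₀ }, a * (t : G) = b * (t' : G) then w hg2'.choose
        else μ z) = z hg.choose
      rw [dif_pos hg]
    rw [hx, this]
  have h2 : (fun t : { t : G // t ∈ T₀ } => x (b * (t : G))) = w := by
    funext t
    have hg : ¬ ∃ t' : { t : G // t ∈ T₀ }, b * (t : G) = a * (t' : G) := by
      rintro ⟨t', ht'⟩; exact hab t t' ht'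
    have hg' : ∃ t' : { t : G // t ∈ T₀ }, b * (t : G) = b * (t' : G) := ⟨t, rfl⟩
    have : hg'.choose = t := by
      have := hg'.choose_spec
      exact Subtype.ext (mul_left_cancel this.symm)
    have hx : x (b * (t : G)) = w hg'.choose := by
      show (if hg2 : ∃ t' : { t : G // t ∈ T₀ }, b * (t : G) = a * (t' : G) then z hg2.choose
        else if hg2' : ∃ t' : { t : G // t ∈ T₀ }, b * (t : G) = b * (t' : G) then w hg2'.choose
        else μ z) = w hg'.choose
      rw [dif_neg hg, dif_pos hg']
    rw [hx, this]
  rw [← h1, ← h2]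
  exact key
end
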